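/- Let n ≥ 1, n1 ≥ 2, r ≥ 0, m1, m2 ≥ 0 with m = m1+m2 ≥ 1, let d1 ∈ U(n1; 2^{m1} 3^{m2}), let d2 be a column-balanced n1×r matrix with entries in {1,2}, let D3 be the column augmented design and D3b the design D3 with the appended blocking column. (i) If d0 ∈ U(n; 2^{m1} 3^{m2}), then WD(D3) = LBW3 if and only if WD(D3b) = C(r+1) + (n²/(n+n1)²)·(3/2)^{r+1}·WD(d0) + (1/(n+n1)²)·(5/4)^{m1}·(23/18)^{m2+r}·((3/2)·T1 + 2·(5/4)·T2). (ii) If m2 = 0 and d0 ∈ U(n; 2^m), then WD(D3) = LBW3_2 if and only if WD(D3b) = C(r+1) + (n²/(n+n1)²)·(3/2)^{r+1}·WD(d0) + (1/(n+n1)²)·(5/4)^m·(23/18)^r·((3/2)·T1' + 2·(5/4)·(p1·(6/5)^{w1} + q1·(6/5)^{w1+1})). (iii) If m1 = 0 and d0 ∈ U(n; 3^m), then WD(D3) = LBW3_3 if and only if WD(D3b) = C(r+1) + (n²/(n+n1)²)·(3/2)^{r+1}·WD(d0) + (1/(n+n1)²)·(23/18)^{m+r}·((3/2)·(p2·(27/23)^{w2}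 + q2·(27/23)^{w2+1}) + 2·(5/4)·(p3·(27/23)^{w3} + q3·(27/23)^{w3+1})). -/

import Mathlib

open Finset

noncomputable section

namespace CAUD

/-- The mapped point value `u = (2x+1)/(2q)`. -/
def uVal (q x : ℕ) : ℝ := (2 * (x : ℝ) + 1) / (2 * (q : ℝ))

/-- The squared wrap-around L2-discrepancy of an `N × M` design whose `k`-th
column takes values in `{0, …, q k - 1}`. -/
def WD {N M : ℕ} (q : Fin M → ℕ) (x : Fin N → Fin M → ℕ) : ℝ :=
  -((4 : ℝ) / 3) ^ M + (1 / (N : ℝ) ^ 2) *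
    ∑ i : Fin N, ∑ j : Fin N, ∏ k : Fin M,
      ((3 : ℝ) / 2 - |uVal (q k) (x i k) - uVal (q k) (x j k)| *
        (1 - |uVal (q k) (x i k) - uVal (q k) (x j k)|))

/-- A mixed-level U-type design in `U(N; 2^{m1} 3^{m2})`: the first `m1` columns are
two-level and balanced, the last `m2` columns are three-level and balanced. -/
def IsUType (N m1 m2 : ℕ) (d : Fin N → Fin (m1 + m2) → ℕ) : Prop :=
  ∀ k : Fin (m1 + m2),
    if (k : ℕ) < m1 then
      (∀ i, d i k < 2) ∧ ∀ v < 2, 2 * (univ.filter (fun i => d i k = v)).card = N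
    else
      (∀ i, d i k < 3) ∧ ∀ v < 3, 3 * (univ.filter (fun i => d i k = v)).card = N

/-- A column-balanced `n1 × r` matrix with entries in `{1, 2}`: every column has
exactly `n1/2` entries equal to 1 and `n1/2` entries equal to 2. -/
def IsBalanced (n1 r : ℕ) (d2 : Fin n1 → Fin r → ℕ) : Prop :=
  (∀ i k, d2 i k = 1 ∨ d2 i k = 2) ∧
  ∀ k, 2 * (univ.filter (fun i => d2 i k = 1)).card = n1 ∧
       2 * (univ.filter (fun i => d2 i k = 2)).card = n1

/-- The column augmented design: first `n` rows are `(d0, 0)`, last `n1` rows `(d1, d2)`. -/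
def augDesign (n n1 m r : ℕ) (d0 : Fin n → Fin m → ℕ) (d1 : Fin n1 → Fin m → ℕ)
    (d2 : Fin n1 → Fin r → ℕ) : Fin (n + n1) → Fin (m + r) → ℕ := fun i k =>
  if hi : (i : ℕ) < n then
    if hk : (k : ℕ) < m then d0 ⟨i, hi⟩ ⟨k, hk⟩ else 0
  else
    if hk : (k : ℕ) < m then d1 ⟨(i : ℕ) - n, by have := i.isLt; omega⟩ ⟨k, hk⟩
    else d2 ⟨(i : ℕ) - n, by have := i.isLt; omega⟩ ⟨(k : ℕ) - m, by have := k.isLt; omega⟩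

/-- Append one blocking column: 0 on the initial rows, 1 on the follow-up rows. -/
def appendOne (n n1 M : ℕ) (D : Fin (n + n1) → Fin M → ℕ) :
    Fin (n + n1) → Fin (M + 1) → ℕ := fun i k =>
  if hk : (k : ℕ) < M then D i ⟨k, hk⟩ else if (i : ℕ) < n then 0 else 1

/-- Append two blocking columns: the first is 0 on the initial rows and 1 on the
follow-up rows; the second is 0 on the initial rows and the first `n1/2` follow-up
rows, and 1 on the remaining follow-up rows. -/
def appendTwo (n n1 M : ℕ) (D : Fin (n + n1) → Fin M → ℕ) :
    Fin (n + n1) → Fin (M + 2) → ℕ := fun i k =>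
  if hk : (k : ℕ) < M then D i ⟨k, hk⟩
  else if (k : ℕ) = M then (if (i : ℕ) < n then 0 else 1)
  else (if (i : ℕ) < n + n1 / 2 then 0 else 1)

/-- Level sizes of the (possibly blocking-augmented) column augmented design:
first `m1` columns are two-level, the next `m2 + r` are three-level, anything
after that (blocking columns) is two-level. -/
def qfun (m1 m2 r k : ℕ) : ℕ :=
  if k < m1 then 2 else if k < m1 + m2 + r then 3 else 2

/-- Coincidence number among the first `m1` columns. -/
def Fco {N M : ℕ} (m1 : ℕ) (D : Fin N → Fin M → ℕ) (i j : Fin N) : ℕ :=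
  (univ.filter (fun k : Fin M => (k : ℕ) < m1 ∧ D i k = D j k)).card

/-- Coincidence number among columns `m1, …, m1 + m2 - 1`. -/
def Vco {N M : ℕ} (m1 m2 : ℕ) (D : Fin N → Fin M → ℕ) (i j : Fin N) : ℕ :=
  (univ.filter (fun k : Fin M => m1 ≤ (k : ℕ) ∧ (k : ℕ) < m1 + m2 ∧ D i k = D j k)).card

/-- Coincidence number among the columns `≥ m`, counting agreements with common
value in `{1, 2}`. -/
def Tco {N M : ℕ} (m : ℕ) (D : Fin N → Fin M → ℕ) (i j : Fin N) : ℕ :=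
  (univ.filter (fun k : Fin M =>
    m ≤ (k : ℕ) ∧ D i k = D j k ∧ (D i k = 1 ∨ D i k = 2))).card

/-- Total coincidence number between two rows. -/
def lam {N M : ℕ} (D : Fin N → Fin M → ℕ) (i j : Fin N) : ℕ :=
  (univ.filter (fun k : Fin M => D i k = D j k)).card

/-- Number of rows whose `k`-th entry is `u` and whose `l`-th entry is `v`. -/
def nuv {N M : ℕ} (d : Fin N → Fin M → ℕ) (k l : Fin M) (u v : ℕ) : ℕ :=
  (univ.filter (fun i : Fin N => d i k = u ∧ d i l = v)).card

/-- Non-orthogonality of a pair of columns. -/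
def fNOD {N M : ℕ} (q : Fin M → ℕ) (d : Fin N → Fin M → ℕ) (k l : Fin M) : ℝ :=
  ∑ u ∈ Finset.range (q k), ∑ v ∈ Finset.range (q l),
    ((nuv d k l u v : ℝ) - (N : ℝ) / ((q k : ℝ) * (q l : ℝ))) ^ 2

/-- The `E(f_NOD)` criterion: average non-orthogonality over all pairs of columns. -/
def EfNOD {N M : ℕ} (q : Fin M → ℕ) (d : Fin N → Fin M → ℕ) : ℝ :=
  (∑ k : Fin M, ∑ l : Fin M, if (k : ℕ) < (l : ℕ) then fNOD q d k l else 0) /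
    (Nat.choose M 2 : ℝ)

/-- Stacking the stage designs `d 0, …, d (l-1)` on top of one another. -/
def stack (M : ℕ) (ns : ℕ → ℕ) (d : (j : ℕ) → Fin (ns j) → Fin M → ℕ) :
    (l : ℕ) → Fin (∑ j ∈ Finset.range l, ns j) → Fin M → ℕ
  | 0 => fun _ _ => 0
  | l + 1 => fun i =>
    let i' : Fin ((∑ j ∈ Finset.range l, ns j) + ns l) :=
      Fin.cast (Finset.sum_range_succ ns l) i
    if h : (i' : ℕ) < ∑ j ∈ Finset.range l, ns j then
      stack M ns d l ⟨(i' : ℕ), h⟩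
    else d l ⟨(i' : ℕ) - ∑ j ∈ Finset.range l, ns j, by have := i'.isLt; omega⟩

def aa : ℝ := Real.log (6 / 5)

def bb : ℝ := Real.log (27 / 23)

/-- The constant `C(s)`. -/
def Cconst (n n1 m s : ℕ) : ℝ :=
  -(((4 : ℝ) / 3) ^ s - ((n : ℝ) ^ 2 / ((n : ℝ) + n1) ^ 2) * ((3 : ℝ) / 2) ^ s) * ((4 : ℝ) / 3) ^ m
  + ((n1 : ℝ) / ((n : ℝ) + n1) ^ 2) * ((3 : ℝ) / 2) ^ (m + s)

def phi1 (n1 m1 m2 r : ℕ) : ℝ :=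
  aa * m1 * ((n1 : ℝ) - 2) / (2 * ((n1 : ℝ) - 1)) + bb * m2 * ((n1 : ℝ) - 3) / (3 * ((n1 : ℝ) - 1))
  + bb * r * ((n1 : ℝ) - 2) / (2 * ((n1 : ℝ) - 1))

def phi2 (m1 m2 : ℕ) : ℝ := aa * m1 / 2 + bb * m2 / 3

def T1c (n1 m1 m2 r : ℕ) : ℝ := (n1 : ℝ) * ((n1 : ℝ) - 1) * Real.exp (phi1 n1 m1 m2 r)

def T2c (n n1 m1 m2 : ℕ) : ℝ := (n : ℝ) * (n1 : ℝ) * Real.exp (phi2 m1 m2)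

/-- Lower bound `LBW3` (mixed-level case, Theorem 1). -/
def LBW3 (n n1 m1 m2 r : ℕ) (wd0 : ℝ) : ℝ :=
  Cconst n n1 (m1 + m2) r + ((n : ℝ) ^ 2 / ((n : ℝ) + n1) ^ 2) * ((3 : ℝ) / 2) ^ r * wd0
  + (1 / ((n : ℝ) + n1) ^ 2) * ((5 : ℝ) / 4) ^ m1 * ((23 : ℝ) / 18) ^ (m2 + r) *
      (T1c n1 m1 m2 r + 2 * T2c n n1 m1 m2)

def phi1p (n1 m r : ℕ) : ℝ :=
  aa * m * ((n1 : ℝ) - 2) / (2 * ((n1 : ℝ) - 1)) + bb * r * ((n1 : ℝ) - 2) / (2 * ((n1 : ℝ) - 1))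

def T1pc (n1 m r : ℕ) : ℝ := (n1 : ℝ) * ((n1 : ℝ) - 1) * Real.exp (phi1p n1 m r)

def w1 (m : ℕ) : ℕ := m / 2

def q1c (n n1 m : ℕ) : ℝ := (m : ℝ) * n * n1 / 2 - (n : ℝ) * n1 * (w1 m : ℝ)

def p1c (n n1 m : ℕ) : ℝ := (n : ℝ) * n1 - q1c n n1 m

/-- Lower bound `LBW3` for a two-level initial design (Theorem 2). -/
def LBW32 (n n1 m r : ℕ) (wd0 : ℝ) : ℝ :=
  Cconst n n1 m r + ((n : ℝ) ^ 2 / ((n : ℝ) + n1) ^ 2) * ((3 : ℝ) / 2) ^ r * wd0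
  + (1 / ((n : ℝ) + n1) ^ 2) * ((5 : ℝ) / 4) ^ m * ((23 : ℝ) / 18) ^ r *
      (T1pc n1 m r + 2 * (p1c n n1 m * ((6 : ℝ) / 5) ^ w1 m + q1c n n1 m * ((6 : ℝ) / 5) ^ (w1 m + 1)))

def w2 (n1 m r : ℕ) : ℤ :=
  ⌊(m : ℝ) * ((n1 : ℝ) - 3) / (3 * ((n1 : ℝ) - 1)) + (r : ℝ) * ((n1 : ℝ) - 2) / (2 * ((n1 : ℝ) - 1))⌋

def q2c (n1 m r : ℕ) : ℝ :=
  (m : ℝ) * n1 * ((n1 : ℝ) - 3) / 3 + (r : ℝ) * n1 * ((n1 : ℝ) - 2) / 2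
  - (n1 : ℝ) * ((n1 : ℝ) - 1) * (w2 n1 m r : ℝ)

def p2c (n1 m r : ℕ) : ℝ := (n1 : ℝ) * ((n1 : ℝ) - 1) - q2c n1 m r

def w3 (m : ℕ) : ℕ := m / 3

def q3c (n n1 m : ℕ) : ℝ := (m : ℝ) * n * n1 / 3 - (n : ℝ) * n1 * (w3 m : ℝ)

def p3c (n n1 m : ℕ) : ℝ := (n : ℝ) * n1 - q3c n n1 m

/-- Lower bound `LBW3` for a three-level initial design (Theorem 3). -/
def LBW33 (n n1 m r : ℕ) (wd0 : ℝ) : ℝ :=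
  Cconst n n1 m r + ((n : ℝ) ^ 2 / ((n : ℝ) + n1) ^ 2) * ((3 : ℝ) / 2) ^ r * wd0
  + (1 / ((n : ℝ) + n1) ^ 2) * ((23 : ℝ) / 18) ^ (m + r) *
      (p2c n1 m r * ((27 : ℝ) / 23) ^ w2 n1 m r + q2c n1 m r * ((27 : ℝ) / 23) ^ (w2 n1 m r + 1)
       + 2 * (p3c n n1 m * ((27 : ℝ) / 23) ^ w3 m + q3c n n1 m * ((27 : ℝ) / 23) ^ (w3 m + 1)))

/-- Lower bound of Theorem 4 for a mixed-level initial design. -/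
def LBW3b1 (n n1 m1 m2 r : ℕ) (wd0 : ℝ) : ℝ :=
  Cconst n n1 (m1 + m2) (r + 1) + ((n : ℝ) ^ 2 / ((n : ℝ) + n1) ^ 2) * ((3 : ℝ) / 2) ^ (r + 1) * wd0
  + (1 / ((n : ℝ) + n1) ^ 2) * ((5 : ℝ) / 4) ^ m1 * ((23 : ℝ) / 18) ^ (m2 + r) *
      ((3 : ℝ) / 2 * T1c n1 m1 m2 r + 2 * ((5 : ℝ) / 4) * T2c n n1 m1 m2)

/-- Lower bound of Theorem 4 for a two-level initial design. -/
def LBW3b2 (n n1 m r : ℕ) (wd0 : ℝ) : ℝ :=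
  Cconst n n1 m (r + 1) + ((n : ℝ) ^ 2 / ((n : ℝ) + n1) ^ 2) * ((3 : ℝ) / 2) ^ (r + 1) * wd0
  + (1 / ((n : ℝ) + n1) ^ 2) * ((5 : ℝ) / 4) ^ m * ((23 : ℝ) / 18) ^ r *
      ((3 : ℝ) / 2 * T1pc n1 m r +
        2 * ((5 : ℝ) / 4) * (p1c n n1 m * ((6 : ℝ) / 5) ^ w1 m + q1c n n1 m * ((6 : ℝ) / 5) ^ (w1 m + 1)))

/-- Lower bound of Theorem 4 for a three-level initial design. -/
def LBW3b3 (n n1 m r : ℕ) (wd0 : ℝ) : ℝ :=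
  Cconst n n1 m (r + 1) + ((n : ℝ) ^ 2 / ((n : ℝ) + n1) ^ 2) * ((3 : ℝ) / 2) ^ (r + 1) * wd0
  + (1 / ((n : ℝ) + n1) ^ 2) * ((23 : ℝ) / 18) ^ (m + r) *
      ((3 : ℝ) / 2 * (p2c n1 m r * ((27 : ℝ) / 23) ^ w2 n1 m r
                      + q2c n1 m r * ((27 : ℝ) / 23) ^ (w2 n1 m r + 1))
       + 2 * ((5 : ℝ) / 4) * (p3c n n1 m * ((27 : ℝ) / 23) ^ w3 m
                              + q3c n n1 m * ((27 : ℝ) / 23) ^ (w3 m + 1)))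

def phi1B (n1 m1 m2 r : ℕ) : ℝ :=
  aa * ((m1 : ℝ) + 1) * ((n1 : ℝ) - 2) / (2 * ((n1 : ℝ) - 1))
  + bb * m2 * ((n1 : ℝ) - 3) / (3 * ((n1 : ℝ) - 1))
  + bb * r * ((n1 : ℝ) - 2) / (2 * ((n1 : ℝ) - 1))

def phi2B (m1 m2 : ℕ) : ℝ := aa * ((m1 : ℝ) + 1) / 2 + bb * m2 / 3

def T1Bc (n1 m1 m2 r : ℕ) : ℝ := (n1 : ℝ) * ((n1 : ℝ) - 1) * Real.exp (phi1B n1 m1 m2 r)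

def T2Bc (n n1 m1 m2 : ℕ) : ℝ := (n : ℝ) * (n1 : ℝ) * Real.exp (phi2B m1 m2)

/-- Lower bound `LBW3B` (Theorem 5). -/
def LBW3B (n n1 m1 m2 r : ℕ) (wd0 : ℝ) : ℝ :=
  Cconst n n1 (m1 + m2) (r + 2) + ((n : ℝ) ^ 2 / ((n : ℝ) + n1) ^ 2) * ((3 : ℝ) / 2) ^ (r + 2) * wd0
  + (1 / ((n : ℝ) + n1) ^ 2) * ((5 : ℝ) / 4) ^ (m1 + 1) * ((23 : ℝ) / 18) ^ (m2 + r) *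
      ((3 : ℝ) / 2 * T1Bc n1 m1 m2 r + 2 * ((5 : ℝ) / 4) * T2Bc n n1 m1 m2)

def psi1 (n1 m1 m2 r : ℕ) : ℤ :=
  ⌊((m1 : ℝ) * ((n1 : ℝ) - 2) / 2 + (m2 : ℝ) * ((n1 : ℝ) - 3) / 3 + (r : ℝ) * ((n1 : ℝ) - 2) / 2) /
      ((n1 : ℝ) - 1)⌋

def eta1 (n1 m1 m2 r : ℕ) : ℝ :=
  (m1 : ℝ) * n1 * ((n1 : ℝ) - 2) / 2 + (m2 : ℝ) * n1 * ((n1 : ℝ) - 3) / 3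
  + (r : ℝ) * n1 * ((n1 : ℝ) - 2) / 2 - (n1 : ℝ) * ((n1 : ℝ) - 1) * (psi1 n1 m1 m2 r : ℝ)

def zeta1 (n1 m1 m2 r : ℕ) : ℝ := (n1 : ℝ) * ((n1 : ℝ) - 1) - eta1 n1 m1 m2 r

def psi2 (m1 m2 : ℕ) : ℤ := ⌊(m1 : ℝ) / 2 + (m2 : ℝ) / 3⌋

def eta2 (n n1 m1 m2 : ℕ) : ℝ :=
  (m1 : ℝ) * n * n1 / 2 + (m2 : ℝ) * n * n1 / 3 - (n : ℝ) * n1 * (psi2 m1 m2 : ℝ)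

def zeta2 (n n1 m1 m2 : ℕ) : ℝ := (n : ℝ) * n1 - eta2 n n1 m1 m2

def Q1c (n1 m1 m2 r : ℕ) : ℝ :=
  zeta1 n1 m1 m2 r * (psi1 n1 m1 m2 r : ℝ) ^ 2 + eta1 n1 m1 m2 r * ((psi1 n1 m1 m2 r : ℝ) + 1) ^ 2

def Q1pc (n1 m1 m2 r : ℕ) : ℝ :=
  zeta1 n1 m1 m2 r * ((psi1 n1 m1 m2 r : ℝ) + 1) ^ 2 + eta1 n1 m1 m2 r * ((psi1 n1 m1 m2 r : ℝ) + 2) ^ 2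

def Q2c (n n1 m1 m2 : ℕ) : ℝ :=
  zeta2 n n1 m1 m2 * (psi2 m1 m2 : ℝ) ^ 2 + eta2 n n1 m1 m2 * ((psi2 m1 m2 : ℝ) + 1) ^ 2

/-- Lower bound `LBf3` for `E(f_NOD)` of the column augmented design. -/
def LBf3 (n n1 m1 m2 r : ℕ) (ef0 : ℝ) : ℝ :=
  ((m1 : ℝ) + m2) * ((m1 : ℝ) + m2 - 1) / (((m1 : ℝ) + m2 + r) * ((m1 : ℝ) + m2 + r - 1)) * ef0
  + 1 / (((m1 : ℝ) + m2 + r) * ((m1 : ℝ) + m2 + r - 1)) * (Q1c n1 m1 m2 r + 2 * Q2c n n1 m1 m2)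
  + ((n : ℝ) + n1) * ((m1 : ℝ) + m2 + r) / ((m1 : ℝ) + m2 + r - 1)
  - 1 / (((m1 : ℝ) + m2 + r) * ((m1 : ℝ) + m2 + r - 1)) *
    ((n : ℝ) * ((m1 : ℝ) + m2) ^ 2
      - (n : ℝ) ^ 2 * (((m1 : ℝ) + (m1 : ℝ) ^ 2) / 4 + (2 * (m2 : ℝ) + (m2 : ℝ) ^ 2) / 9
          + (m1 : ℝ) * m2 / 3)
      - (r : ℝ) * m1 * n * ((n : ℝ) - 2)
      - 2 * (r : ℝ) * m2 * n * ((n : ℝ) - 3) / 3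
      - (n : ℝ) * ((n : ℝ) - 1) * (r : ℝ) ^ 2
      + (r : ℝ) * ((n : ℝ) ^ 2 + (n1 : ℝ) ^ 2 / 2)
      + ((m1 : ℝ) / 2 + (m2 : ℝ) / 3 + (m1 : ℝ) * ((m1 : ℝ) - 1) / 4
          + ((m2 : ℝ) + r) * ((m2 : ℝ) + r - 1) / 9 + (m1 : ℝ) * ((m2 : ℝ) + r) / 3)
        * ((n : ℝ) + n1) ^ 2)

/-- Lower bound `LBf3b` for `E(f_NOD)` of the design with one added blocking column. -/
def LBf3b (n n1 m1 m2 r : ℕ) (ef0 : ℝ) : ℝ :=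
  ((m1 : ℝ) + m2) * ((m1 : ℝ) + m2 - 1) / (((m1 : ℝ) + m2 + r + 1) * ((m1 : ℝ) + m2 + r)) * ef0
  + 1 / (((m1 : ℝ) + m2 + r + 1) * ((m1 : ℝ) + m2 + r)) * (Q1pc n1 m1 m2 r + 2 * Q2c n n1 m1 m2)
  + ((n : ℝ) + n1) * ((m1 : ℝ) + m2 + r + 1) / ((m1 : ℝ) + m2 + r)
  - 1 / (((m1 : ℝ) + m2 + r + 1) * ((m1 : ℝ) + m2 + r)) *
    ((n : ℝ) * ((m1 : ℝ) + m2) ^ 2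
      - (n : ℝ) ^ 2 * (((m1 : ℝ) + (m1 : ℝ) ^ 2) / 4 + (2 * (m2 : ℝ) + (m2 : ℝ) ^ 2) / 9
          + (m1 : ℝ) * m2 / 3)
      - ((r : ℝ) + 1) * m1 * n * ((n : ℝ) - 2)
      - 2 * ((r : ℝ) + 1) * m2 * n * ((n : ℝ) - 3) / 3
      - (n : ℝ) * ((n : ℝ) - 1) * ((r : ℝ) + 1) ^ 2
      + (r : ℝ) * ((n : ℝ) ^ 2 + (n1 : ℝ) ^ 2 / 2) + (n : ℝ) ^ 2 + (n1 : ℝ) ^ 2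
      + ((m1 : ℝ) / 2 + (m2 : ℝ) / 3 + (m1 : ℝ) * ((m1 : ℝ) + 1) / 4
          + ((m2 : ℝ) + r) * ((m2 : ℝ) + r - 1) / 9 + ((m1 : ℝ) + 1) * ((m2 : ℝ) + r) / 3)
        * ((n : ℝ) + n1) ^ 2)

/-- Lower bound `LBf3B` for `E(f_NOD)` of the design with two added blocking columns. -/
def LBf3B (n n1 m1 m2 r : ℕ) (ef0 : ℝ) : ℝ :=
  ((m1 : ℝ) + m2) * ((m1 : ℝ) + m2 - 1) / (((m1 : ℝ) + m2 + r + 2) * ((m1 : ℝ) + m2 + r + 1)) * ef0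
  + 1 / (((m1 : ℝ) + m2 + r + 2) * ((m1 : ℝ) + m2 + r + 1)) *
      (Q1pc n1 (m1 + 1) m2 r + 2 * Q2c n n1 (m1 + 1) m2)
  + ((n : ℝ) + n1) * ((m1 : ℝ) + m2 + r + 2) / ((m1 : ℝ) + m2 + r + 1)
  - 1 / (((m1 : ℝ) + m2 + r + 2) * ((m1 : ℝ) + m2 + r + 1)) *
    ((n : ℝ) * ((m1 : ℝ) + m2) ^ 2
      - (n : ℝ) ^ 2 * (((m1 : ℝ) + (m1 : ℝ) ^ 2) / 4 + (2 * (m2 : ℝ) + (m2 : ℝ) ^ 2) / 9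
          + (m1 : ℝ) * m2 / 3)
      - ((r : ℝ) + 2) * m1 * n * ((n : ℝ) - 2)
      - 2 * ((r : ℝ) + 2) * m2 * n * ((n : ℝ) - 3) / 3
      - (n : ℝ) * ((n : ℝ) - 1) * ((r : ℝ) + 2) ^ 2
      + ((r : ℝ) + 2) * (n : ℝ) ^ 2 + (3 + (r : ℝ)) * (n1 : ℝ) ^ 2 / 2 + (n : ℝ) * n1
      + ((m1 : ℝ) / 2 + (m2 : ℝ) / 3 + ((m1 : ℝ) + 2) * ((m1 : ℝ) + 1) / 4
          + ((m2 : ℝ) + r) * ((m2 : ℝ) + r - 1) / 9 + ((m1 : ℝ) + 2) * ((m2 : ℝ) + r) / 3)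
        * ((n : ℝ) + n1) ^ 2)

/-!
Each factor of the wrap-around kernel equals `3/2` on a coincidence and `5/4` (two levels) or
`23/18` (three levels) otherwise. Hence the kernel of two rows of `D3` is
`(5/4)^m1 (23/18)^(m2+r) (6/5)^F (27/23)^H`, where `F` and `H` count the coincidences in the
two- and three-level columns, and the zero columns of the initial rows never coincide with `d2`.
Splitting the double sum of `WD(D3)` into initial and follow-up rows expresses `WD(D3)` through
`WD(d0)` and two pair sums, `S1` over distinct follow-up rows and `S2` over initial/follow-up
pairs, with weight `S1 + 2 S2`. The blocking column multiplies the within-group terms by `3/2`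
and the cross terms by `5/4`, so `WD(D3b)` is the same expression with weight
`3/2 S1 + 5/2 S2`. Every lower bound is this expression with `S1`, `S2` replaced by lower
bounds for them (Jensen's inequality for `exp`, or the chord bound for `t ^ k` at the integers
`w`, `w + 1`), which only depend on the total number of coincidences, fixed by the balance of
the columns. So each of the two equalities holds exactly when both pair sums attain their
bounds.
-/

def wrapKernel (q a b : ℕ) : ℝ :=
  3 / 2 - |uVal q a - uVal q b| * (1 - |uVal q a - uVal q b|)

def kernelProd {M : ℕ} (q : Fin M → ℕ) (u v : Fin M → ℕ) : ℝ :=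
  ∏ k, wrapKernel (q k) (u k) (v k)

def agreements {ι : Type*} [Fintype ι] (u v : ι → ℕ) : ℕ := #{k | u k = v k}

theorem WD_eq_sum_kernelProd {N M : ℕ} (q : Fin M → ℕ) (x : Fin N → Fin M → ℕ) :
    WD q x = -(4 / 3) ^ M + 1 / (N : ℝ) ^ 2 * ∑ i, ∑ j, kernelProd q (x i) (x j) :=
  rfl

theorem sq_mul_WD_add {N M : ℕ} (q : Fin M → ℕ) (x : Fin N → Fin M → ℕ) :
    (N : ℝ) ^ 2 * (WD q x + (4 / 3) ^ M) = ∑ i, ∑ j, kernelProd q (x i) (x j) := by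
  rcases N.eq_zero_or_pos with rfl | hN
  · simp
  · rw [WD_eq_sum_kernelProd]
    field_simp
    ring

theorem wrapKernel_self (q a : ℕ) : wrapKernel q a a = 3 / 2 := by
  simp [wrapKernel]

theorem wrapKernel_comm (q a b : ℕ) : wrapKernel q a b = wrapKernel q b a := by
  simp only [wrapKernel, abs_sub_comm]

theorem wrapKernel_two {a b : ℕ} (ha : a < 2) (hb : b < 2) :
    wrapKernel 2 a b = if a = b then 3 / 2 else 5 / 4 := by
  interval_cases a <;> interval_cases b <;>
    norm_num [wrapKernel, uVal, abs_of_nonneg, abs_of_nonpos]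

theorem wrapKernel_three {a b : ℕ} (ha : a < 3) (hb : b < 3) :
    wrapKernel 3 a b = if a = b then 3 / 2 else 23 / 18 := by
  interval_cases a <;> interval_cases b <;>
    norm_num [wrapKernel, uVal, abs_of_nonneg, abs_of_nonpos]

theorem kernelProd_append {m r : ℕ} (q : Fin m → ℕ) (q' : Fin r → ℕ) (u v : Fin m → ℕ)
    (u' v' : Fin r → ℕ) :
    kernelProd (Fin.append q q') (Fin.append u u') (Fin.append v v')
      = kernelProd q u v * kernelProd q' u' v' := by
  simp [kernelProd, Fin.prod_univ_add]

theorem kernelProd_self {M : ℕ} (q u : Fin M → ℕ) : kernelProd q u u = (3 / 2) ^ M := by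
  simp [kernelProd, wrapKernel_self, div_pow]

theorem kernelProd_comm {M : ℕ} (q u v : Fin M → ℕ) : kernelProd q u v = kernelProd q v u :=
  Finset.prod_congr rfl fun _ _ => wrapKernel_comm _ _ _

theorem prod_ite_eq_pow_mul_pow_agreements {ι : Type*} [Fintype ι] (u v : ι → ℕ) {s c : ℝ}
    (hc : c ≠ 0) :
    ∏ k, (if u k = v k then s else c) = c ^ Fintype.card ι * (s / c) ^ agreements u v := by
  rw [Finset.prod_ite, Finset.prod_const, Finset.prod_const, agreements, ← Finset.card_univ,
    ← Finset.card_filter_add_card_filter_not (s := univ) (fun k => u k = v k), pow_add, div_pow]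
  field_simp

theorem kernelProd_two {M : ℕ} {u v : Fin M → ℕ} (hu : ∀ k, u k < 2) (hv : ∀ k, v k < 2) :
    kernelProd (fun _ => 2) u v = (5 / 4) ^ M * (6 / 5) ^ agreements u v := by
  rw [kernelProd, Finset.prod_congr rfl fun k _ => wrapKernel_two (hu k) (hv k),
    prod_ite_eq_pow_mul_pow_agreements u v (by norm_num), Fintype.card_fin]
  norm_num

theorem kernelProd_three {M : ℕ} {u v : Fin M → ℕ} (hu : ∀ k, u k < 3)
    (hv : ∀ k, v k < 3) :
    kernelProd (fun _ => 3) u v = (23 / 18) ^ M * (27 / 23) ^ agreements u v := by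
  rw [kernelProd, Finset.prod_congr rfl fun k _ => wrapKernel_three (hu k) (hv k),
    prod_ite_eq_pow_mul_pow_agreements u v (by norm_num), Fintype.card_fin]
  norm_num

theorem sum_sum_fin_add_of_symm {n n1 : ℕ} (g : Fin (n + n1) → Fin (n + n1) → ℝ)
    (hg : ∀ i j, g i j = g j i) :
    ∑ i, ∑ j, g i j
      = ∑ i, ∑ i', g (Fin.castAdd n1 i) (Fin.castAdd n1 i')
        + 2 * ∑ i, ∑ j, g (Fin.castAdd n1 i) (Fin.natAdd n j)
        + ∑ j, ∑ j', g (Fin.natAdd n j) (Fin.natAdd n j') := by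
  have hcross : ∑ j, ∑ i, g (Fin.natAdd n j) (Fin.castAdd n1 i)
      = ∑ i, ∑ j, g (Fin.castAdd n1 i) (Fin.natAdd n j) := by
    rw [Finset.sum_comm]
    exact Finset.sum_congr rfl fun _ _ => Finset.sum_congr rfl fun _ _ => hg _ _
  simp only [Fin.sum_univ_add, Finset.sum_add_distrib, hcross]
  ring

theorem sum_sum_eq_sum_add_sum_offDiag {α M : Type*} [Fintype α] [DecidableEq α]
    [AddCommMonoid M] (f : α → α → M) :
    ∑ i, ∑ j, f i j = ∑ i, f i i + ∑ p ∈ (univ : Finset α).offDiag, f p.1 p.2 := by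
  rw [← Finset.sum_product', ← Finset.diag_union_offDiag,
    Finset.sum_union (Finset.disjoint_diag_offDiag _), Finset.sum_diag]

def IsLevelBalanced {α : Type*} [Fintype α] (L : Finset ℕ) (f : α → ℕ) : Prop :=
  (∀ a, f a ∈ L) ∧ ∀ v ∈ L, #L * #{a | f a = v} = Fintype.card α

theorem sum_sum_ite_eq_of_isLevelBalanced {α β : Type*} [Fintype α] [Fintype β]
    {L : Finset ℕ} {x : α → ℕ} {y : β → ℕ} (hx : ∀ a, x a ∈ L) (hy : IsLevelBalanced L y) :
    ∑ a, ∑ b, (if x a = y b then 1 else 0 : ℝ)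
      = Fintype.card α * (Fintype.card β / #L) := by
  have hrow : ∀ a, ∑ b, (if x a = y b then 1 else 0 : ℝ) = Fintype.card β / #L := fun a => by
    have hL : (#L : ℝ) ≠ 0 := by exact_mod_cast (Finset.card_pos.mpr ⟨_, hx a⟩).ne'
    rw [Finset.sum_boole, eq_div_iff hL]
    simp_rw [eq_comm (a := x a)]
    exact_mod_cast (mul_comm _ _).trans (hy.2 (x a) (hx a))
  simp [hrow]

theorem sum_sum_agreements {α β ι : Type*} [Fintype α] [Fintype β] [Fintype ι]
    {L : Finset ℕ} {x : α → ι → ℕ} {y : β → ι → ℕ} (hx : ∀ a k, x a k ∈ L)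
    (hy : ∀ k, IsLevelBalanced L fun b => y b k) :
    ∑ a, ∑ b, (agreements (x a) (y b) : ℝ)
      = Fintype.card ι * (Fintype.card α * (Fintype.card β / #L)) := by
  simp only [agreements, Finset.natCast_card_filter]
  calc ∑ a, ∑ b, ∑ k, (if x a k = y b k then 1 else 0 : ℝ)
      = ∑ k, ∑ a, ∑ b, (if x a k = y b k then 1 else 0 : ℝ) :=
        (Finset.sum_congr rfl fun _ _ => Finset.sum_comm).trans Finset.sum_comm
    _ = _ := by
        rw [Finset.sum_congr rfl fun k _ => sum_sum_ite_eq_of_isLevelBalanced (hx · k) (hy k)]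
        simp

theorem sum_offDiag_agreements {α ι : Type*} [Fintype α] [DecidableEq α] [Fintype ι]
    {L : Finset ℕ} {x : α → ι → ℕ} (hx : ∀ k, IsLevelBalanced L fun a => x a k) :
    ∑ p ∈ (univ : Finset α).offDiag, (agreements (x p.1) (x p.2) : ℝ)
      = Fintype.card ι * (Fintype.card α * (Fintype.card α / #L) - Fintype.card α) := by
  have hdiag : ∀ a, (agreements (x a) (x a) : ℝ) = Fintype.card ι := fun a => by
    simp [agreements]
  have h := sum_sum_agreements (fun a k => (hx k).1 a) hx
  rw [sum_sum_eq_sum_add_sum_offDiag, Finset.sum_congr rfl fun a _ => hdiag a] at h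
  simp only [Finset.sum_const, Finset.card_univ, nsmul_eq_mul] at h
  linarith

theorem agreements_of_isEmpty {ι : Type*} [Fintype ι] [IsEmpty ι] (u v : ι → ℕ) :
    agreements u v = 0 := by
  simp [agreements]

theorem card_offDiag_univ_fin (N : ℕ) :
    (#(univ : Finset (Fin N)).offDiag : ℝ) = N * (N - 1) := by
  rw [Finset.offDiag_card, Finset.card_univ, Fintype.card_fin,
    Nat.cast_sub (Nat.le_mul_self N)]
  push_cast
  ring

theorem card_mul_exp_le_sum_exp {α : Type*} (s : Finset α) (f : α → ℝ) {c : ℝ}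
    (hc : ∑ p ∈ s, f p = #s * c) :
    #s * Real.exp c ≤ ∑ p ∈ s, Real.exp (f p) := by
  calc (#s : ℝ) * Real.exp c = ∑ p ∈ s, Real.exp c * (f p - c + 1) := by
        rw [← Finset.mul_sum, Finset.sum_add_distrib, Finset.sum_sub_distrib, hc]
        simp
        ring
    _ ≤ ∑ p ∈ s, Real.exp (f p) := Finset.sum_le_sum fun p _ => by
        calc Real.exp c * (f p - c + 1) ≤ Real.exp c * Real.exp (f p - c) :=
              mul_le_mul_of_nonneg_left (Real.add_one_le_exp _) (Real.exp_pos c).le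
          _ = Real.exp (f p) := by rw [← Real.exp_add, add_sub_cancel]

theorem one_add_mul_sub_one_le_zpow {t : ℝ} (ht : 0 < t) (j : ℤ) :
    1 + j * (t - 1) ≤ t ^ j := by
  obtain ⟨k, rfl | rfl⟩ := j.eq_nat_or_neg
  · simpa using one_add_mul_le_pow (a := t - 1) (by linarith) k
  · -- Bernoulli's inequality for `t⁻¹`, together with `t + t⁻¹ ≥ 2`.
    have hinv : 1 - t ≤ t⁻¹ - 1 := by
      have hsq : 0 ≤ (t - 1) ^ 2 / t := by positivity
      have : (t - 1) ^ 2 / t = t + t⁻¹ - 2 := by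
        field_simp
        ring
      linarith
    have hk := one_add_mul_le_pow (a := t⁻¹ - 1) (by linarith [inv_pos.mpr ht]) k
    rw [add_sub_cancel, inv_pow] at hk
    rw [zpow_neg, zpow_natCast]
    push_cast
    nlinarith [(Nat.cast_nonneg k : (0 : ℝ) ≤ k)]

theorem sum_pow_ge_of_chord {α : Type*} (s : Finset α) (f : α → ℕ) {t : ℝ} (ht : 0 < t)
    (w : ℤ) {p q : ℝ} (hq : q = ∑ x ∈ s, (f x : ℝ) - #s * w) (hp : p = #s - q) :
    p * t ^ w + q * t ^ (w + 1) ≤ ∑ x ∈ s, t ^ f x := by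
  calc p * t ^ w + q * t ^ (w + 1)
      = ∑ x ∈ s, t ^ w * (1 + ((f x : ℤ) - w : ℤ) * (t - 1)) := by
        rw [← Finset.mul_sum, zpow_add_one₀ ht.ne', hp, hq]
        push_cast
        rw [Finset.sum_add_distrib, ← Finset.sum_mul, Finset.sum_sub_distrib]
        simp
        ring
    _ ≤ ∑ x ∈ s, t ^ f x := Finset.sum_le_sum fun x _ => by
        calc t ^ w * (1 + ((f x : ℤ) - w : ℤ) * (t - 1)) ≤ t ^ w * t ^ ((f x : ℤ) - w) :=
              mul_le_mul_of_nonneg_left (one_add_mul_sub_one_le_zpow ht _) (by positivity)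
          _ = t ^ f x := by rw [← zpow_add₀ ht.ne', add_sub_cancel, zpow_natCast]

theorem pow_mul_pow_eq_exp (F H : ℕ) :
    (6 / 5 : ℝ) ^ F * (27 / 23) ^ H = Real.exp (aa * F + bb * H) := by
  rw [Real.exp_add, mul_comm aa, mul_comm bb, Real.exp_nat_mul, Real.exp_nat_mul, aa, bb,
    Real.exp_log (by norm_num), Real.exp_log (by norm_num)]

theorem augDesign_castAdd {n n1 m r : ℕ} (d0 : Fin n → Fin m → ℕ)
    (d1 : Fin n1 → Fin m → ℕ) (d2 : Fin n1 → Fin r → ℕ) (i : Fin n) :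
    augDesign n n1 m r d0 d1 d2 (Fin.castAdd n1 i) = Fin.append (d0 i) fun _ => 0 := by
  funext k
  refine Fin.addCases (fun k => ?_) (fun k => ?_) k <;> simp [augDesign]

theorem augDesign_natAdd {n n1 m r : ℕ} (d0 : Fin n → Fin m → ℕ)
    (d1 : Fin n1 → Fin m → ℕ) (d2 : Fin n1 → Fin r → ℕ) (j : Fin n1) :
    augDesign n n1 m r d0 d1 d2 (Fin.natAdd n j) = Fin.append (d1 j) (d2 j) := by
  funext k
  refine Fin.addCases (fun k => ?_) (fun k => ?_) k <;> simp [augDesign]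

theorem appendOne_apply {n n1 M : ℕ} (D : Fin (n + n1) → Fin M → ℕ) (i : Fin (n + n1)) :
    appendOne n n1 M D i = Fin.append (D i) fun _ : Fin 1 => if (i : ℕ) < n then 0 else 1 := by
  funext k
  refine Fin.addCases (fun k => ?_) (fun k => ?_) k <;> simp [appendOne]

theorem qfun_zero_eq_append (m1 m2 : ℕ) :
    (fun k : Fin (m1 + m2) => qfun m1 m2 0 k) = Fin.append (fun _ : Fin m1 => 2) fun _ => 3 := by
  funext k
  refine Fin.addCases (fun k => ?_) (fun k => ?_) k <;> simp [qfun]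

theorem qfun_eq_append_three (m1 m2 r : ℕ) :
    (fun k : Fin (m1 + m2 + r) => qfun m1 m2 r k)
      = Fin.append (fun k : Fin (m1 + m2) => qfun m1 m2 0 k) fun _ => 3 := by
  funext k
  refine Fin.addCases (fun k => ?_) (fun k => ?_) k
  · simp [qfun, show (k : ℕ) < m1 + m2 + r by omega]
  · simp [qfun]
    omega

theorem qfun_eq_append_two (m1 m2 r : ℕ) :
    (fun k : Fin (m1 + m2 + r + 1) => qfun m1 m2 r k)
      = Fin.append (fun k : Fin (m1 + m2 + r) => qfun m1 m2 r k) fun _ => 2 := by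
  funext k
  refine Fin.addCases (fun k => ?_) (fun k => ?_) k <;> simp [qfun]

theorem IsUType.lt_qfun {N m1 m2 : ℕ} {d : Fin N → Fin (m1 + m2) → ℕ}
    (hd : IsUType N m1 m2 d) (i : Fin N) (k : Fin (m1 + m2)) : d i k < qfun m1 m2 0 k := by
  have hk := hd k
  unfold qfun
  split_ifs at hk ⊢ <;> first | exact hk.1 i | omega

theorem IsUType.isLevelBalanced_two {N m1 m2 : ℕ} {d : Fin N → Fin (m1 + m2) → ℕ}
    (hd : IsUType N m1 m2 d) (k : Fin m1) :
    IsLevelBalanced (range 2) fun i => d i (Fin.castAdd m2 k) := by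
  have hk := hd (Fin.castAdd m2 k)
  rw [if_pos (by simp)] at hk
  exact ⟨fun i => mem_range.mpr (hk.1 i), fun v hv => by simpa using hk.2 v (mem_range.mp hv)⟩

theorem IsUType.isLevelBalanced_three {N m1 m2 : ℕ} {d : Fin N → Fin (m1 + m2) → ℕ}
    (hd : IsUType N m1 m2 d) (k : Fin m2) :
    IsLevelBalanced (range 3) fun i => d i (Fin.natAdd m1 k) := by
  have hk := hd (Fin.natAdd m1 k)
  rw [if_neg (by simp)] at hk
  exact ⟨fun i => mem_range.mpr (hk.1 i), fun v hv => by simpa using hk.2 v (mem_range.mp hv)⟩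

theorem IsBalanced.isLevelBalanced {n1 r : ℕ} {d2 : Fin n1 → Fin r → ℕ}
    (hd2 : IsBalanced n1 r d2) (k : Fin r) : IsLevelBalanced {1, 2} fun j => d2 j k := by
  refine ⟨fun j => by simpa using hd2.1 j k, fun v hv => ?_⟩
  rcases mem_insert.mp hv with rfl | hv
  · simpa using (hd2.2 k).1
  · simpa [mem_singleton.mp hv] using (hd2.2 k).2

def levelWeight (m1 m2 : ℕ) (u v : Fin (m1 + m2) → ℕ) : ℝ :=
  (6 / 5) ^ agreements (u ∘ Fin.castAdd m2) (v ∘ Fin.castAdd m2) *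
    (27 / 23) ^ agreements (u ∘ Fin.natAdd m1) (v ∘ Fin.natAdd m1)

theorem kernelProd_qfun_zero {m1 m2 : ℕ} {u v : Fin (m1 + m2) → ℕ}
    (hu : ∀ k, u k < qfun m1 m2 0 k) (hv : ∀ k, v k < qfun m1 m2 0 k) :
    kernelProd (fun k => qfun m1 m2 0 k) u v
      = (5 / 4) ^ m1 * (23 / 18) ^ m2 * levelWeight m1 m2 u v := by
  have hsplit := kernelProd_append (fun _ : Fin m1 => 2) (fun _ : Fin m2 => 3)
    (u ∘ Fin.castAdd m2) (v ∘ Fin.castAdd m2) (u ∘ Fin.natAdd m1) (v ∘ Fin.natAdd m1)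
  simp only [Function.comp_def, Fin.append_castAdd_natAdd, ← qfun_zero_eq_append] at hsplit
  rw [hsplit, levelWeight,
    kernelProd_two (fun k => by simpa [qfun] using hu (Fin.castAdd m2 k))
      (fun k => by simpa [qfun] using hv (Fin.castAdd m2 k)),
    kernelProd_three (fun k => by simpa [qfun] using hu (Fin.natAdd m1 k))
      (fun k => by simpa [qfun] using hv (Fin.natAdd m1 k))]
  simp only [Function.comp_def]
  ring

theorem kernelProd_appendOne {n n1 M : ℕ} (q : Fin M → ℕ) (D : Fin (n + n1) → Fin M → ℕ)
    (i j : Fin (n + n1)) :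
    kernelProd (Fin.append q fun _ => 2) (appendOne n n1 M D i) (appendOne n n1 M D j)
      = kernelProd q (D i) (D j) * if ((i : ℕ) < n ↔ (j : ℕ) < n) then 3 / 2 else 5 / 4 := by
  rw [appendOne_apply, appendOne_apply, kernelProd_append]
  by_cases hi : (i : ℕ) < n <;> by_cases hj : (j : ℕ) < n <;>
    simp [hi, hj, kernelProd, wrapKernel_self, wrapKernel_two]

def followPairSum (m1 m2 : ℕ) {n1 r : ℕ} (d1 : Fin n1 → Fin (m1 + m2) → ℕ)
    (d2 : Fin n1 → Fin r → ℕ) : ℝ :=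
  ∑ p ∈ (univ : Finset (Fin n1)).offDiag,
    levelWeight m1 m2 (d1 p.1) (d1 p.2) * (27 / 23) ^ agreements (d2 p.1) (d2 p.2)

def crossPairSum (m1 m2 : ℕ) {n n1 : ℕ} (d0 : Fin n → Fin (m1 + m2) → ℕ)
    (d1 : Fin n1 → Fin (m1 + m2) → ℕ) : ℝ :=
  ∑ i, ∑ j, levelWeight m1 m2 (d0 i) (d1 j)

/-- The common form of `WD` of the column augmented design (`WD_augDesign`, with `X`, `Y` the
pair sums) and of the bounds `LBW3`, `LBW32`, `LBW33` (with `X`, `Y` lower bounds for them). -/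
def augShape (n n1 m1 m2 r : ℕ) (wd0 X Y : ℝ) : ℝ :=
  -(4 / 3) ^ (m1 + m2 + r) + 1 / ((n : ℝ) + n1) ^ 2 *
    ((3 / 2) ^ r * ((n : ℝ) ^ 2 * (wd0 + (4 / 3) ^ (m1 + m2))) + n1 * (3 / 2) ^ (m1 + m2 + r)
      + (5 / 4) ^ m1 * (23 / 18) ^ (m2 + r) * (X + 2 * Y))

/-- The analogue of `augShape` for the blocked design (`WD_appendOne_augDesign`) and the bounds
`LBW3b1`, `LBW3b2`, `LBW3b3`. -/
def blockedShape (n n1 m1 m2 r : ℕ) (wd0 X Y : ℝ) : ℝ :=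
  -(4 / 3) ^ (m1 + m2 + r + 1) + 1 / ((n : ℝ) + n1) ^ 2 *
    (3 / 2 * ((3 / 2) ^ r * ((n : ℝ) ^ 2 * (wd0 + (4 / 3) ^ (m1 + m2)))
        + n1 * (3 / 2) ^ (m1 + m2 + r))
      + (5 / 4) ^ m1 * (23 / 18) ^ (m2 + r) * (3 / 2 * X + 5 / 2 * Y))

section augmented

variable {n n1 m1 m2 r : ℕ} {d0 : Fin n → Fin (m1 + m2) → ℕ}
  {d1 : Fin n1 → Fin (m1 + m2) → ℕ} {d2 : Fin n1 → Fin r → ℕ}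

theorem kernelProd_augDesign_initial_followUp (hd0 : IsUType n m1 m2 d0)
    (hd1 : IsUType n1 m1 m2 d1) (hd2 : IsBalanced n1 r d2) (i : Fin n) (j : Fin n1) :
    kernelProd (fun k : Fin (m1 + m2 + r) => qfun m1 m2 r k)
        (augDesign n n1 (m1 + m2) r d0 d1 d2 (Fin.castAdd n1 i))
        (augDesign n n1 (m1 + m2) r d0 d1 d2 (Fin.natAdd n j))
      = (5 / 4) ^ m1 * (23 / 18) ^ (m2 + r) * levelWeight m1 m2 (d0 i) (d1 j) := by
  have hd2j : ∀ k, d2 j k < 3 := fun k => by rcases hd2.1 j k with h | h <;> omega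
  have hnone : agreements (fun _ : Fin r => 0) (d2 j) = 0 := by
    simp only [agreements, Finset.card_eq_zero, Finset.filter_eq_empty_iff]
    intro k _
    rcases hd2.1 j k with h | h <;> omega
  rw [qfun_eq_append_three, augDesign_castAdd, augDesign_natAdd, kernelProd_append,
    kernelProd_qfun_zero (hd0.lt_qfun i) (hd1.lt_qfun j),
    kernelProd_three (fun _ => by omega) hd2j, hnone]
  ring

theorem kernelProd_augDesign_followUp (hd1 : IsUType n1 m1 m2 d1) (hd2 : IsBalanced n1 r d2)
    (j j' : Fin n1) :
    kernelProd (fun k : Fin (m1 + m2 + r) => qfun m1 m2 r k)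
        (augDesign n n1 (m1 + m2) r d0 d1 d2 (Fin.natAdd n j))
        (augDesign n n1 (m1 + m2) r d0 d1 d2 (Fin.natAdd n j'))
      = (5 / 4) ^ m1 * (23 / 18) ^ (m2 + r) *
          (levelWeight m1 m2 (d1 j) (d1 j') * (27 / 23) ^ agreements (d2 j) (d2 j')) := by
  have hd2' : ∀ j k, d2 j k < 3 := fun j k => by rcases hd2.1 j k with h | h <;> omega
  rw [qfun_eq_append_three, augDesign_natAdd, augDesign_natAdd, kernelProd_append,
    kernelProd_qfun_zero (hd1.lt_qfun j) (hd1.lt_qfun j'), kernelProd_three (hd2' j) (hd2' j')]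
  ring

theorem sum_kernelProd_initial :
    ∑ i, ∑ i', kernelProd (fun k : Fin (m1 + m2 + r) => qfun m1 m2 r k)
        (augDesign n n1 (m1 + m2) r d0 d1 d2 (Fin.castAdd n1 i))
        (augDesign n n1 (m1 + m2) r d0 d1 d2 (Fin.castAdd n1 i'))
      = (3 / 2) ^ r * ((n : ℝ) ^ 2 * (WD (fun k : Fin (m1 + m2) => qfun m1 m2 0 k) d0
          + (4 / 3) ^ (m1 + m2))) := by
  simp only [qfun_eq_append_three, augDesign_castAdd, kernelProd_append, kernelProd_self,
    sq_mul_WD_add, Finset.mul_sum]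
  simp only [mul_comm]

theorem sum_kernelProd_initial_followUp (hd0 : IsUType n m1 m2 d0)
    (hd1 : IsUType n1 m1 m2 d1) (hd2 : IsBalanced n1 r d2) :
    ∑ i, ∑ j, kernelProd (fun k : Fin (m1 + m2 + r) => qfun m1 m2 r k)
        (augDesign n n1 (m1 + m2) r d0 d1 d2 (Fin.castAdd n1 i))
        (augDesign n n1 (m1 + m2) r d0 d1 d2 (Fin.natAdd n j))
      = (5 / 4) ^ m1 * (23 / 18) ^ (m2 + r) * crossPairSum m1 m2 d0 d1 := by
  simp only [kernelProd_augDesign_initial_followUp hd0 hd1 hd2, crossPairSum, Finset.mul_sum]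

theorem sum_kernelProd_followUp (hd1 : IsUType n1 m1 m2 d1) (hd2 : IsBalanced n1 r d2) :
    ∑ j, ∑ j', kernelProd (fun k : Fin (m1 + m2 + r) => qfun m1 m2 r k)
        (augDesign n n1 (m1 + m2) r d0 d1 d2 (Fin.natAdd n j))
        (augDesign n n1 (m1 + m2) r d0 d1 d2 (Fin.natAdd n j'))
      = n1 * (3 / 2) ^ (m1 + m2 + r)
        + (5 / 4) ^ m1 * (23 / 18) ^ (m2 + r) * followPairSum m1 m2 d1 d2 := by
  rw [sum_sum_eq_sum_add_sum_offDiag]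
  simp only [kernelProd_self, Finset.sum_const, Finset.card_univ, Fintype.card_fin, nsmul_eq_mul,
    kernelProd_augDesign_followUp hd1 hd2, followPairSum, Finset.mul_sum]

theorem WD_augDesign (hd0 : IsUType n m1 m2 d0) (hd1 : IsUType n1 m1 m2 d1)
    (hd2 : IsBalanced n1 r d2) :
    WD (fun k : Fin (m1 + m2 + r) => qfun m1 m2 r k) (augDesign n n1 (m1 + m2) r d0 d1 d2)
      = augShape n n1 m1 m2 r (WD (fun k : Fin (m1 + m2) => qfun m1 m2 0 k) d0)
          (followPairSum m1 m2 d1 d2) (crossPairSum m1 m2 d0 d1) := by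
  rw [WD_eq_sum_kernelProd, sum_sum_fin_add_of_symm _ fun i j => kernelProd_comm _ _ _,
    sum_kernelProd_initial, sum_kernelProd_initial_followUp hd0 hd1 hd2,
    sum_kernelProd_followUp hd1 hd2, augShape]
  push_cast
  ring

theorem WD_appendOne_augDesign (hd0 : IsUType n m1 m2 d0) (hd1 : IsUType n1 m1 m2 d1)
    (hd2 : IsBalanced n1 r d2) :
    WD (fun k : Fin (m1 + m2 + r + 1) => qfun m1 m2 r k)
        (appendOne n n1 (m1 + m2 + r) (augDesign n n1 (m1 + m2) r d0 d1 d2))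
      = blockedShape n n1 m1 m2 r (WD (fun k : Fin (m1 + m2) => qfun m1 m2 0 k) d0)
          (followPairSum m1 m2 d1 d2) (crossPairSum m1 m2 d0 d1) := by
  rw [WD_eq_sum_kernelProd, qfun_eq_append_two]
  simp only [kernelProd_appendOne]
  rw [sum_sum_fin_add_of_symm _ fun i j => by
    rw [kernelProd_comm]; exact congrArg _ (if_congr iff_comm rfl rfl)]
  simp only [Fin.val_castAdd, Fin.val_natAdd, Fin.is_lt, iff_self, if_true,
    show ∀ j : Fin n1, ¬ n + (j : ℕ) < n from fun j => by omega, iff_false, not_true, if_false,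
    ← Finset.sum_mul, sum_kernelProd_initial, sum_kernelProd_initial_followUp hd0 hd1 hd2,
    sum_kernelProd_followUp hd1 hd2, blockedShape]
  push_cast
  ring

end augmented

section shapes

variable {n n1 m1 m2 r : ℕ} {wd0 S T X Y : ℝ}

theorem augShape_eq_augShape_iff (hN : (n : ℝ) + n1 ≠ 0) (hX : X ≤ S) (hY : Y ≤ T) :
    augShape n n1 m1 m2 r wd0 S T = augShape n n1 m1 m2 r wd0 X Y ↔ S = X ∧ T = Y := by
  rw [augShape, augShape, add_right_inj, mul_right_inj' (one_div_ne_zero (pow_ne_zero 2 hN)),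
    add_right_inj, mul_right_inj' (by positivity)]
  constructor
  · intro h
    constructor <;> linarith
  · rintro ⟨rfl, rfl⟩
    rfl

theorem blockedShape_eq_blockedShape_iff (hN : (n : ℝ) + n1 ≠ 0) (hX : X ≤ S) (hY : Y ≤ T) :
    blockedShape n n1 m1 m2 r wd0 S T = blockedShape n n1 m1 m2 r wd0 X Y ↔ S = X ∧ T = Y := by
  rw [blockedShape, blockedShape, add_right_inj,
    mul_right_inj' (one_div_ne_zero (pow_ne_zero 2 hN)), add_right_inj,
    mul_right_inj' (by positivity)]
  constructor
  · intro h
    constructor <;> linarith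
  · rintro ⟨rfl, rfl⟩
    rfl

theorem LBW3_eq_augShape :
    LBW3 n n1 m1 m2 r wd0 = augShape n n1 m1 m2 r wd0 (T1c n1 m1 m2 r) (T2c n n1 m1 m2) := by
  rw [LBW3, augShape, Cconst]
  ring

theorem LBW3b1_eq_blockedShape :
    LBW3b1 n n1 m1 m2 r wd0
      = blockedShape n n1 m1 m2 r wd0 (T1c n1 m1 m2 r) (T2c n n1 m1 m2) := by
  rw [LBW3b1, blockedShape, Cconst]
  ring

theorem T1pc_eq_T1c (hm2 : m2 = 0) : T1pc n1 (m1 + m2) r = T1c n1 m1 m2 r := by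
  subst hm2
  simp [T1pc, T1c, phi1p, phi1]

theorem LBW32_eq_augShape (hm2 : m2 = 0) :
    LBW32 n n1 (m1 + m2) r wd0 = augShape n n1 m1 m2 r wd0 (T1c n1 m1 m2 r)
      (p1c n n1 (m1 + m2) * (6 / 5) ^ w1 (m1 + m2)
        + q1c n n1 (m1 + m2) * (6 / 5) ^ (w1 (m1 + m2) + 1)) := by
  rw [LBW32, augShape, Cconst, T1pc_eq_T1c hm2, hm2]
  ring

theorem LBW3b2_eq_blockedShape (hm2 : m2 = 0) :
    LBW3b2 n n1 (m1 + m2) r wd0 = blockedShape n n1 m1 m2 r wd0 (T1c n1 m1 m2 r)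
      (p1c n n1 (m1 + m2) * (6 / 5) ^ w1 (m1 + m2)
        + q1c n n1 (m1 + m2) * (6 / 5) ^ (w1 (m1 + m2) + 1)) := by
  rw [LBW3b2, blockedShape, Cconst, T1pc_eq_T1c hm2, hm2]
  ring

theorem LBW33_eq_augShape (hm1 : m1 = 0) :
    LBW33 n n1 (m1 + m2) r wd0 = augShape n n1 m1 m2 r wd0
      (p2c n1 (m1 + m2) r * (27 / 23) ^ w2 n1 (m1 + m2) r
        + q2c n1 (m1 + m2) r * (27 / 23) ^ (w2 n1 (m1 + m2) r + 1))
      (p3c n n1 (m1 + m2) * (27 / 23) ^ w3 (m1 + m2)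
        + q3c n n1 (m1 + m2) * (27 / 23) ^ (w3 (m1 + m2) + 1)) := by
  rw [LBW33, augShape, Cconst, hm1]
  ring

theorem LBW3b3_eq_blockedShape (hm1 : m1 = 0) :
    LBW3b3 n n1 (m1 + m2) r wd0 = blockedShape n n1 m1 m2 r wd0
      (p2c n1 (m1 + m2) r * (27 / 23) ^ w2 n1 (m1 + m2) r
        + q2c n1 (m1 + m2) r * (27 / 23) ^ (w2 n1 (m1 + m2) r + 1))
      (p3c n n1 (m1 + m2) * (27 / 23) ^ w3 (m1 + m2)
        + q3c n n1 (m1 + m2) * (27 / 23) ^ (w3 (m1 + m2) + 1)) := by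
  rw [LBW3b3, blockedShape, Cconst, hm1]
  ring

end shapes

section bounds

variable {n n1 m1 m2 r : ℕ} {d0 : Fin n → Fin (m1 + m2) → ℕ}
  {d1 : Fin n1 → Fin (m1 + m2) → ℕ} {d2 : Fin n1 → Fin r → ℕ}

theorem T1c_le_followPairSum (hn1 : 2 ≤ n1) (hd1 : IsUType n1 m1 m2 d1)
    (hd2 : IsBalanced n1 r d2) : T1c n1 m1 m2 r ≤ followPairSum m1 m2 d1 d2 := by
  have hF := sum_offDiag_agreements (x := fun j => d1 j ∘ Fin.castAdd m2)
    hd1.isLevelBalanced_two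
  have hG := sum_offDiag_agreements (x := fun j => d1 j ∘ Fin.natAdd m1)
    hd1.isLevelBalanced_three
  have hD := sum_offDiag_agreements hd2.isLevelBalanced
  have hn1' : (n1 : ℝ) - 1 ≠ 0 := by
    have : (2 : ℝ) ≤ n1 := by exact_mod_cast hn1
    linarith
  have hmean : ∑ p ∈ (univ : Finset (Fin n1)).offDiag,
      (aa * agreements (d1 p.1 ∘ Fin.castAdd m2) (d1 p.2 ∘ Fin.castAdd m2)
        + bb * (agreements (d1 p.1 ∘ Fin.natAdd m1) (d1 p.2 ∘ Fin.natAdd m1)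
          + agreements (d2 p.1) (d2 p.2) : ℕ))
      = #(univ : Finset (Fin n1)).offDiag * phi1 n1 m1 m2 r := by
    simp only [Nat.cast_add, mul_add, Finset.sum_add_distrib, ← Finset.mul_sum]
    rw [hF, hG, hD, card_offDiag_univ_fin, phi1]
    simp only [Fintype.card_fin, Finset.card_range]
    rw [show #({1, 2} : Finset ℕ) = 2 from rfl]
    field_simp
    ring
  calc T1c n1 m1 m2 r
      = #(univ : Finset (Fin n1)).offDiag * Real.exp (phi1 n1 m1 m2 r) := by
        rw [card_offDiag_univ_fin, T1c]
    _ ≤ _ := card_mul_exp_le_sum_exp _ _ hmean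
    _ = followPairSum m1 m2 d1 d2 := Finset.sum_congr rfl fun p _ => by
        rw [← pow_mul_pow_eq_exp, levelWeight, mul_assoc, ← pow_add]

theorem T2c_le_crossPairSum (hd0 : IsUType n m1 m2 d0) (hd1 : IsUType n1 m1 m2 d1) :
    T2c n n1 m1 m2 ≤ crossPairSum m1 m2 d0 d1 := by
  have hF := sum_sum_agreements (x := fun i => d0 i ∘ Fin.castAdd m2)
    (y := fun j => d1 j ∘ Fin.castAdd m2)
    (fun i k => (hd0.isLevelBalanced_two k).1 i) hd1.isLevelBalanced_two
  have hG := sum_sum_agreements (x := fun i => d0 i ∘ Fin.natAdd m1)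
    (y := fun j => d1 j ∘ Fin.natAdd m1)
    (fun i k => (hd0.isLevelBalanced_three k).1 i) hd1.isLevelBalanced_three
  have hmean : ∑ p : Fin n × Fin n1,
      (aa * agreements (d0 p.1 ∘ Fin.castAdd m2) (d1 p.2 ∘ Fin.castAdd m2)
        + bb * agreements (d0 p.1 ∘ Fin.natAdd m1) (d1 p.2 ∘ Fin.natAdd m1))
      = #(univ : Finset (Fin n × Fin n1)) * phi2 m1 m2 := by
    simp only [Fintype.sum_prod_type, Finset.sum_add_distrib, ← Finset.mul_sum]
    rw [hF, hG, phi2]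
    simp
    ring
  calc T2c n n1 m1 m2 = #(univ : Finset (Fin n × Fin n1)) * Real.exp (phi2 m1 m2) := by
        simp [T2c]
    _ ≤ _ := card_mul_exp_le_sum_exp _ _ hmean
    _ = crossPairSum m1 m2 d0 d1 := by
        rw [crossPairSum, ← Fintype.sum_prod_type']
        exact Finset.sum_congr rfl fun p _ => by rw [← pow_mul_pow_eq_exp, levelWeight]

theorem p1c_mul_add_q1c_mul_le_crossPairSum (hm2 : m2 = 0) (hd0 : IsUType n m1 m2 d0)
    (hd1 : IsUType n1 m1 m2 d1) :
    p1c n n1 (m1 + m2) * (6 / 5) ^ w1 (m1 + m2)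
        + q1c n n1 (m1 + m2) * (6 / 5) ^ (w1 (m1 + m2) + 1)
      ≤ crossPairSum m1 m2 d0 d1 := by
  subst hm2
  have hF := sum_sum_agreements (x := fun i => d0 i ∘ Fin.castAdd 0)
    (y := fun j => d1 j ∘ Fin.castAdd 0)
    (fun i k => (hd0.isLevelBalanced_two k).1 i) hd1.isLevelBalanced_two
  have h := sum_pow_ge_of_chord (univ : Finset (Fin n × Fin n1))
    (fun p => agreements (d0 p.1 ∘ Fin.castAdd 0) (d1 p.2 ∘ Fin.castAdd 0)) (t := 6 / 5)
    (by norm_num) (w1 (m1 + 0)) (p := p1c n n1 (m1 + 0)) (q := q1c n n1 (m1 + 0))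
    (by simp only [Fintype.sum_prod_type]; rw [hF, q1c]; simp; ring) (by simp [p1c])
  convert h using 1
  · norm_cast
  · rw [crossPairSum, ← Fintype.sum_prod_type']
    exact Finset.sum_congr rfl fun p _ => by simp [levelWeight, agreements_of_isEmpty]

theorem p2c_mul_add_q2c_mul_le_followPairSum (hm1 : m1 = 0) (hd1 : IsUType n1 m1 m2 d1)
    (hd2 : IsBalanced n1 r d2) :
    p2c n1 (m1 + m2) r * (27 / 23) ^ w2 n1 (m1 + m2) r
        + q2c n1 (m1 + m2) r * (27 / 23) ^ (w2 n1 (m1 + m2) r + 1)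
      ≤ followPairSum m1 m2 d1 d2 := by
  subst hm1
  have hG := sum_offDiag_agreements (x := fun j => d1 j ∘ Fin.natAdd 0)
    hd1.isLevelBalanced_three
  have hD := sum_offDiag_agreements hd2.isLevelBalanced
  have h := sum_pow_ge_of_chord (univ : Finset (Fin n1)).offDiag
    (fun p => agreements (d1 p.1 ∘ Fin.natAdd 0) (d1 p.2 ∘ Fin.natAdd 0)
      + agreements (d2 p.1) (d2 p.2)) (t := 27 / 23) (by norm_num) (w2 n1 (0 + m2) r)
    (p := p2c n1 (0 + m2) r) (q := q2c n1 (0 + m2) r)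
    (by
      simp only [Nat.cast_add, Finset.sum_add_distrib]
      rw [hG, hD, card_offDiag_univ_fin, q2c]
      simp only [Fintype.card_fin, Finset.card_range]
      rw [show #({1, 2} : Finset ℕ) = 2 from rfl]
      push_cast
      ring)
    (by rw [p2c, card_offDiag_univ_fin])
  refine h.trans_eq (Finset.sum_congr rfl fun p _ => ?_)
  simp [levelWeight, agreements_of_isEmpty, pow_add]

theorem p3c_mul_add_q3c_mul_le_crossPairSum (hm1 : m1 = 0) (hd0 : IsUType n m1 m2 d0)
    (hd1 : IsUType n1 m1 m2 d1) :
    p3c n n1 (m1 + m2) * (27 / 23) ^ w3 (m1 + m2)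
        + q3c n n1 (m1 + m2) * (27 / 23) ^ (w3 (m1 + m2) + 1)
      ≤ crossPairSum m1 m2 d0 d1 := by
  subst hm1
  have hG := sum_sum_agreements (x := fun i => d0 i ∘ Fin.natAdd 0)
    (y := fun j => d1 j ∘ Fin.natAdd 0)
    (fun i k => (hd0.isLevelBalanced_three k).1 i) hd1.isLevelBalanced_three
  have h := sum_pow_ge_of_chord (univ : Finset (Fin n × Fin n1))
    (fun p => agreements (d0 p.1 ∘ Fin.natAdd 0) (d1 p.2 ∘ Fin.natAdd 0)) (t := 27 / 23)
    (by norm_num) (w3 (0 + m2)) (p := p3c n n1 (0 + m2)) (q := q3c n n1 (0 + m2))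
    (by simp only [Fintype.sum_prod_type]; rw [hG, q3c]; simp; ring) (by simp [p3c])
  convert h using 1
  · norm_cast
  · rw [crossPairSum, ← Fintype.sum_prod_type']
    exact Finset.sum_congr rfl fun p _ => by simp [levelWeight, agreements_of_isEmpty]

end bounds

theorem WD_augDesign_eq_augShape_iff {n n1 m1 m2 r : ℕ} {d0 : Fin n → Fin (m1 + m2) → ℕ}
    {d1 : Fin n1 → Fin (m1 + m2) → ℕ} {d2 : Fin n1 → Fin r → ℕ} (hn1 : 0 < n1)
    (hd0 : IsUType n m1 m2 d0) (hd1 : IsUType n1 m1 m2 d1) (hd2 : IsBalanced n1 r d2)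
    {X Y : ℝ} (hX : X ≤ followPairSum m1 m2 d1 d2) (hY : Y ≤ crossPairSum m1 m2 d0 d1) :
    WD (fun k : Fin (m1 + m2 + r) => qfun m1 m2 r k) (augDesign n n1 (m1 + m2) r d0 d1 d2)
        = augShape n n1 m1 m2 r (WD (fun k : Fin (m1 + m2) => qfun m1 m2 0 k) d0) X Y ↔
      WD (fun k : Fin (m1 + m2 + r + 1) => qfun m1 m2 r k)
          (appendOne n n1 (m1 + m2 + r) (augDesign n n1 (m1 + m2) r d0 d1 d2))
        = blockedShape n n1 m1 m2 r (WD (fun k : Fin (m1 + m2) => qfun m1 m2 0 k) d0) X Y := by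
  have hN : (n : ℝ) + n1 ≠ 0 := by positivity
  rw [WD_augDesign hd0 hd1 hd2, WD_appendOne_augDesign hd0 hd1 hd2,
    augShape_eq_augShape_iff hN hX hY, blockedShape_eq_blockedShape_iff hN hX hY]

theorem paper_stmt_12_general (n n1 m1 m2 r : ℕ) (hn1 : 2 ≤ n1)
    (d0 : Fin n → Fin (m1 + m2) → ℕ) (d1 : Fin n1 → Fin (m1 + m2) → ℕ)
    (d2 : Fin n1 → Fin r → ℕ)
    (hd0 : IsUType n m1 m2 d0) (hd1 : IsUType n1 m1 m2 d1) (hd2 : IsBalanced n1 r d2) :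
    (WD (fun k : Fin (m1 + m2 + r) => qfun m1 m2 r (k : ℕ)) (augDesign n n1 (m1 + m2) r d0 d1 d2) = LBW3 n n1 m1 m2 r (WD (fun k : Fin (m1 + m2) => qfun m1 m2 0 (k : ℕ)) d0) ↔
      WD (fun k : Fin (m1 + m2 + r + 1) => qfun m1 m2 r (k : ℕ)) (appendOne n n1 (m1 + m2 + r) (augDesign n n1 (m1 + m2) r d0 d1 d2)) = LBW3b1 n n1 m1 m2 r (WD (fun k : Fin (m1 + m2) => qfun m1 m2 0 (k : ℕ)) d0)) ∧
    (m2 = 0 →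
      (WD (fun k : Fin (m1 + m2 + r) => qfun m1 m2 r (k : ℕ)) (augDesign n n1 (m1 + m2) r d0 d1 d2) = LBW32 n n1 (m1 + m2) r (WD (fun k : Fin (m1 + m2) => qfun m1 m2 0 (k : ℕ)) d0) ↔
        WD (fun k : Fin (m1 + m2 + r + 1) => qfun m1 m2 r (k : ℕ)) (appendOne n n1 (m1 + m2 + r) (augDesign n n1 (m1 + m2) r d0 d1 d2)) = LBW3b2 n n1 (m1 + m2) r (WD (fun k : Fin (m1 + m2) => qfun m1 m2 0 (k : ℕ)) d0))) ∧
    (m1 = 0 →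
      (WD (fun k : Fin (m1 + m2 + r) => qfun m1 m2 r (k : ℕ)) (augDesign n n1 (m1 + m2) r d0 d1 d2) = LBW33 n n1 (m1 + m2) r (WD (fun k : Fin (m1 + m2) => qfun m1 m2 0 (k : ℕ)) d0) ↔
        WD (fun k : Fin (m1 + m2 + r + 1) => qfun m1 m2 r (k : ℕ)) (appendOne n n1 (m1 + m2 + r) (augDesign n n1 (m1 + m2) r d0 d1 d2)) = LBW3b3 n n1 (m1 + m2) r (WD (fun k : Fin (m1 + m2) => qfun m1 m2 0 (k : ℕ)) d0))) := by
  have key := fun {X Y : ℝ} (hX : X ≤ followPairSum m1 m2 d1 d2)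
    (hY : Y ≤ crossPairSum m1 m2 d0 d1) =>
    WD_augDesign_eq_augShape_iff (by omega) hd0 hd1 hd2 hX hY
  refine ⟨?_, fun hm2 => ?_, fun hm1 => ?_⟩
  · rw [LBW3_eq_augShape, LBW3b1_eq_blockedShape]
    exact key (T1c_le_followPairSum hn1 hd1 hd2) (T2c_le_crossPairSum hd0 hd1)
  · rw [LBW32_eq_augShape hm2, LBW3b2_eq_blockedShape hm2]
    exact key (T1c_le_followPairSum hn1 hd1 hd2)
      (p1c_mul_add_q1c_mul_le_crossPairSum hm2 hd0 hd1)
  · rw [LBW33_eq_augShape hm1, LBW3b3_eq_blockedShape hm1]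
    exact key (p2c_mul_add_q2c_mul_le_followPairSum hm1 hd1 hd2)
      (p3c_mul_add_q3c_mul_le_crossPairSum hm1 hd0 hd1)

theorem paper_stmt_12 (n n1 m1 m2 r : ℕ) (hn : 1 ≤ n) (hn1 : 2 ≤ n1)
    (hm : 1 ≤ m1 + m2)
    (d0 : Fin n → Fin (m1 + m2) → ℕ) (d1 : Fin n1 → Fin (m1 + m2) → ℕ)
    (d2 : Fin n1 → Fin r → ℕ)
    (hd0 : IsUType n m1 m2 d0) (hd1 : IsUType n1 m1 m2 d1) (hd2 : IsBalanced n1 r d2) :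
    (WD (fun k : Fin (m1 + m2 + r) => qfun m1 m2 r (k : ℕ)) (augDesign n n1 (m1 + m2) r d0 d1 d2) = LBW3 n n1 m1 m2 r (WD (fun k : Fin (m1 + m2) => qfun m1 m2 0 (k : ℕ)) d0) ↔
      WD (fun k : Fin (m1 + m2 + r + 1) => qfun m1 m2 r (k : ℕ)) (appendOne n n1 (m1 + m2 + r) (augDesign n n1 (m1 + m2) r d0 d1 d2)) = LBW3b1 n n1 m1 m2 r (WD (fun k : Fin (m1 + m2) => qfun m1 m2 0 (k : ℕ)) d0)) ∧
    (m2 = 0 →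
      (WD (fun k : Fin (m1 + m2 + r) => qfun m1 m2 r (k : ℕ)) (augDesign n n1 (m1 + m2) r d0 d1 d2) = LBW32 n n1 (m1 + m2) r (WD (fun k : Fin (m1 + m2) => qfun m1 m2 0 (k : ℕ)) d0) ↔
        WD (fun k : Fin (m1 + m2 + r + 1) => qfun m1 m2 r (k : ℕ)) (appendOne n n1 (m1 + m2 + r) (augDesign n n1 (m1 + m2) r d0 d1 d2)) = LBW3b2 n n1 (m1 + m2) r (WD (fun k : Fin (m1 + m2) => qfun m1 m2 0 (k : ℕ)) d0))) ∧
    (m1 = 0 →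
      (WD (fun k : Fin (m1 + m2 + r) => qfun m1 m2 r (k : ℕ)) (augDesign n n1 (m1 + m2) r d0 d1 d2) = LBW33 n n1 (m1 + m2) r (WD (fun k : Fin (m1 + m2) => qfun m1 m2 0 (k : ℕ)) d0) ↔
        WD (fun k : Fin (m1 + m2 + r + 1) => qfun m1 m2 r (k : ℕ)) (appendOne n n1 (m1 + m2 + r) (augDesign n n1 (m1 + m2) r d0 d1 d2)) = LBW3b3 n n1 (m1 + m2) r (WD (fun k : Fin (m1 + m2) => qfun m1 m2 0 (k : ℕ)) d0))) :=
  paper_stmt_12_general n n1 m1 m2 r hn1 d0 d1 d2 hd0 hd1 hd2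

end CAUD

end
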